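/- arXiv:2308.02127 — 3 statements merged into one kernel-verified Lean document; each statement's English description precedes it below -/
import Mathlib

section
/- For any cycle C_n of order n ≥ 3, the total outer-connected domination number of its middle graph equals 2n − 3, i.e., γ_tc(M(C_n)) = 2n − 3. -/
open SimpleGraph

/-- The middle graph `M(G)`: vertices are `V(G) ⊕ E(G)`; an edge-vertex is adjacent to
another edge-vertex iff the edges are distinct and share an endpoint, and a vertex is
adjacent to an edge iff it is incident to it. -/
def middleGraph {V : Type*} (G : SimpleGraph V) : SimpleGraph (V ⊕ G.edgeSet) where
  Adj x y :=
    match x, y with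
    | Sum.inl _, Sum.inl _ => False
    | Sum.inl v, Sum.inr e => v ∈ (e : Sym2 V)
    | Sum.inr e, Sum.inl v => v ∈ (e : Sym2 V)
    | Sum.inr e, Sum.inr f => e ≠ f ∧ ∃ v, v ∈ (e : Sym2 V) ∧ v ∈ (f : Sym2 V)
  symm := by
    constructor
    rintro (v|e) (w|f) h
    · exact h
    · exact h
    · exact h
    · exact ⟨h.1.symm, h.2.imp fun v hv => ⟨hv.2, hv.1⟩⟩
  loopless := by
    constructor
    rintro (v|e) h
    · exact h
    · exact h.1 rfl

/-- `D` is a total dominating set of `G`: every vertex has a neighbour in `D`. -/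
def IsTotalDomSet {V : Type*} (G : SimpleGraph V) (D : Set V) : Prop :=
  ∀ v : V, ∃ u ∈ D, G.Adj v u

/-- `D` is a total outer-connected dominating set of `G`: it is total dominating and
the subgraph induced on the complement of `D` is connected. -/
def IsTOCDomSet {V : Type*} (G : SimpleGraph V) (D : Set V) : Prop :=
  IsTotalDomSet G D ∧ (G.induce Dᶜ).Connected

/-- The total domination number `γₜ(G)`. -/
noncomputable def totalDomNum {V : Type*} (G : SimpleGraph V) : ℕ :=
  sInf {k | ∃ D : Set V, IsTotalDomSet G D ∧ D.ncard = k}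

/-- The total outer-connected domination number `γ_tc(G)`. -/
noncomputable def tocDomNum {V : Type*} (G : SimpleGraph V) : ℕ :=
  sInf {k | ∃ D : Set V, IsTOCDomSet G D ∧ D.ncard = k}

/-- The set of leaves (vertices of degree 1) of `G`. -/
def leafSet {V : Type*} (G : SimpleGraph V) : Set V :=
  {v | ∃ u, G.neighborSet v = {u}}

/-- The wheel graph with hub `none` and rim cycle on `Fin n`. -/
def wheelGraph (n : ℕ) : SimpleGraph (Option (Fin n)) where
  Adj x y :=
    match x, y with
    | none, none => False
    | none, some _ => True
    | some _, none => True
    | some i, some j => (SimpleGraph.cycleGraph n).Adj i j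
  symm := by
    constructor
    rintro (_|i) (_|j) h
    · exact h
    · exact h
    · exact h
    · exact (SimpleGraph.cycleGraph n).adj_symm h
  loopless := by
    constructor
    rintro (_|i) h
    · exact h
    · exact (SimpleGraph.cycleGraph n).loopless.irrefl i h

/-- The corona `G ∘ K₁`: to each vertex `a` of `G` (copy `Sum.inl a`) a pendant
vertex `Sum.inr a` is attached. -/
def corona {V : Type*} (G : SimpleGraph V) : SimpleGraph (V ⊕ V) where
  Adj x y :=
    match x, y with
    | Sum.inl a, Sum.inl b => G.Adj a b
    | Sum.inl a, Sum.inr b => a = b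
    | Sum.inr a, Sum.inl b => a = b
    | Sum.inr _, Sum.inr _ => False
  symm := by
    constructor
    rintro (a|a) (b|b) h
    · exact G.adj_symm h
    · exact h.symm
    · exact h.symm
    · exact h
  loopless := by
    constructor
    rintro (a|a) h
    · exact G.loopless.irrefl a h
    · exact h

/-- The 2-corona `G ∘ P₂`: to each vertex `a` of `G` (copy `Sum.inl a`) a path
`Sum.inl a — Sum.inr (Sum.inl a) — Sum.inr (Sum.inr a)` of length 2 is attached. -/
def corona2 {V : Type*} (G : SimpleGraph V) : SimpleGraph (V ⊕ V ⊕ V) where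
  Adj x y :=
    match x, y with
    | Sum.inl a, Sum.inl b => G.Adj a b
    | Sum.inl a, Sum.inr (Sum.inl b) => a = b
    | Sum.inr (Sum.inl a), Sum.inl b => a = b
    | Sum.inr (Sum.inl a), Sum.inr (Sum.inr b) => a = b
    | Sum.inr (Sum.inr a), Sum.inr (Sum.inl b) => a = b
    | _, _ => False
  symm := by
    constructor
    rintro (a|a|a) (b|b|b) h <;> first | exact G.adj_symm h | exact h.symm | exact h
  loopless := by
    constructor
    rintro (a|a|a) h
    · exact G.loopless.irrefl a h
    · exact h
    · exact h

/-- The spider `S_{1,n,n}`: hub `none`, middle vertices `some (.inl i)`,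
leaves `some (.inr i)`; the star `K_{1,n}` with every edge subdivided once. -/
def spiderGraph (n : ℕ) : SimpleGraph (Option (Fin n ⊕ Fin n)) where
  Adj x y :=
    match x, y with
    | none, some (Sum.inl _) => True
    | some (Sum.inl _), none => True
    | some (Sum.inl i), some (Sum.inr j) => i = j
    | some (Sum.inr i), some (Sum.inl j) => i = j
    | _, _ => False
  symm := by
    constructor
    rintro (_|i|i) (_|j|j) h <;> first | exact h.symm | exact h
  loopless := by
    constructor
    rintro (_|i|i) h <;> exact h

/-- The friendship graph `Fₙ`: `n` triangles sharing the common vertex `none`. -/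
def friendshipGraph (n : ℕ) : SimpleGraph (Option (Fin n × Fin 2)) where
  Adj x y :=
    match x, y with
    | none, some _ => True
    | some _, none => True
    | some (i, a), some (j, b) => i = j ∧ a ≠ b
    | none, none => False
  symm := by
    constructor
    rintro (_|⟨i,a⟩) (_|⟨j,b⟩) h <;> first | exact ⟨h.1.symm, h.2.symm⟩ | exact h
  loopless := by
    constructor
    rintro (_|⟨i,a⟩) h
    · exact h
    · exact h.2 rfl

/-! Let `G` be finite and 2-regular, so that `M(G)` has `2|V|` vertices. A vertex `v` of `G` is
adjacent in `M(G)` only to its two incident edges, so a total dominating set `D` contains one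
of them; hence two edges outside `D` never share an endpoint. Since `M(G) - D` is connected,
`Dᶜ` is then either a single vertex of `G` or contained in `{a, ab, b}` for an edge `ab`, so
`|Dᶜ| ≤ 3`. Conversely, when all degrees are at least 2 every vertex and every edge of `G` has
a neighbour in `M(G)` outside `{a, ab, b}`, and `{a, ab, b}` induces the path `a — ab — b`. -/

namespace SimpleGraph

variable {V : Type*} {G : SimpleGraph V}

theorem Connected.subset_of_adj_mem {s t : Set V} (hs : (G.induce s).Connected) {x : V}
    (hxs : x ∈ s) (hxt : x ∈ t) (ht : ∀ y ∈ s, ∀ z ∈ s, y ∈ t → G.Adj y z → z ∈ t) :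
    s ⊆ t := by
  intro z hz
  suffices ∀ y : s, Relation.ReflTransGen (G.induce s).Adj ⟨x, hxs⟩ y → y.1 ∈ t from
    this ⟨z, hz⟩ ((reachable_iff_reflTransGen _ _).1 (hs.preconnected _ _))
  intro y hy
  induction hy with
  | refl => exact hxt
  | tail _ hadj ih => exact ht _ (Subtype.prop _) _ (Subtype.prop _) ih hadj

section Degree

variable [LocallyFinite G] {v : V}

theorem exists_mem_incidenceSet_ne (h : 2 ≤ G.degree v) (e : Sym2 V) :
    ∃ f ∈ G.incidenceSet v, f ≠ e := by
  classical
  obtain ⟨f, hf, hfe⟩ :=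
    Finset.exists_mem_ne (s := G.incidenceFinset v)
      (by rw [card_incidenceFinset_eq_degree]; omega) e
  exact ⟨f, (mem_incidenceFinset _ _ _).1 hf, hfe⟩

theorem eq_or_eq_of_mem_incidenceSet (h : G.degree v ≤ 2) {e f g : Sym2 V}
    (he : e ∈ G.incidenceSet v) (hf : f ∈ G.incidenceSet v) (hg : g ∈ G.incidenceSet v)
    (hef : e ≠ f) : g = e ∨ g = f := by
  classical
  by_contra! hg'
  have hsub : ({e, f, g} : Finset (Sym2 V)) ⊆ G.incidenceFinset v := by
    simp [Finset.insert_subset_iff, he, hf, hg]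
  have := Finset.card_le_card hsub
  rw [Finset.card_eq_three.2 ⟨e, f, g, hef, hg'.1.symm, hg'.2.symm, rfl⟩,
    card_incidenceFinset_eq_degree] at this
  omega

theorem exists_adj_edge_ne (hdeg : ∀ v, 2 ≤ G.degree v) {u w : V} (huw : G.Adj u w)
    (e : Sym2 V) : ∃ g ∈ G.edgeSet, g ≠ s(u, w) ∧ g ≠ e ∧ (u ∈ g ∨ w ∈ g) := by
  obtain ⟨g, ⟨hg, hug⟩, hgf⟩ := exists_mem_incidenceSet_ne (hdeg u) s(u, w)
  by_cases hge : g = e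
  · obtain ⟨g', ⟨hg', hwg'⟩, hg'f⟩ := exists_mem_incidenceSet_ne (hdeg w) s(u, w)
    refine ⟨g', hg', hg'f, fun hg'e => hgf ?_, Or.inr hwg'⟩
    subst hge hg'e
    exact (Sym2.mem_and_mem_iff huw.ne).1 ⟨hug, hwg'⟩
  · exact ⟨g, hg, hgf, hge, Or.inl hug⟩

end Degree

theorem IsRegularOfDegree.card_edgeFinset_eq_card_of_two [Fintype V] [DecidableRel G.Adj]
    (h : G.IsRegularOfDegree 2) : G.edgeFinset.card = Fintype.card V := by
  have := G.sum_degrees_eq_twice_card_edges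
  simp only [h.degree_eq, Finset.sum_const, Finset.card_univ, smul_eq_mul] at this
  omega

end SimpleGraph

theorem Set.ncard_inl_inr_inl {α β : Type*} {a b : α} (hab : a ≠ b) (x : β) :
    ({.inl a, .inr x, .inl b} : Set (α ⊕ β)).ncard = 3 :=
  Set.ncard_eq_three.2 ⟨_, _, _, by simp, by simp [hab], by simp, rfl⟩

section MiddleGraph

variable {V : Type*} {G : SimpleGraph V}

theorem middleGraph_not_adj_inl_inl {v w : V} : ¬(middleGraph G).Adj (.inl v) (.inl w) := id

theorem middleGraph_adj_inl_inr {v : V} {e : G.edgeSet} :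
    (middleGraph G).Adj (.inl v) (.inr e) ↔ v ∈ (e : Sym2 V) := Iff.rfl

theorem middleGraph_adj_inr_inl {e : G.edgeSet} {v : V} :
    (middleGraph G).Adj (.inr e) (.inl v) ↔ v ∈ (e : Sym2 V) := Iff.rfl

theorem middleGraph_adj_inr_inr {e f : G.edgeSet} :
    (middleGraph G).Adj (.inr e) (.inr f) ↔ e ≠ f ∧ ∃ v, v ∈ (e : Sym2 V) ∧ v ∈ (f : Sym2 V) :=
  Iff.rfl

theorem IsTotalDomSet.exists_inr_mem_of_middleGraph {D : Set (V ⊕ G.edgeSet)}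
    (hD : IsTotalDomSet (middleGraph G) D) (v : V) :
    ∃ e : G.edgeSet, v ∈ (e : Sym2 V) ∧ .inr e ∈ D := by
  obtain ⟨u | e, hu, hadj⟩ := hD (.inl v)
  · exact (middleGraph_not_adj_inl_inl hadj).elim
  · exact ⟨e, middleGraph_adj_inl_inr.1 hadj, hu⟩

theorem IsTotalDomSet.eq_of_inr_notMem_of_middleGraph [G.LocallyFinite]
    (hdeg : ∀ v, G.degree v ≤ 2) {D : Set (V ⊕ G.edgeSet)}
    (hD : IsTotalDomSet (middleGraph G) D) {e f : G.edgeSet} {v : V}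
    (hve : v ∈ (e : Sym2 V)) (hvf : v ∈ (f : Sym2 V)) (he : .inr e ∉ D) (hf : .inr f ∉ D) :
    e = f := by
  by_contra hef
  obtain ⟨g, hvg, hg⟩ := hD.exists_inr_mem_of_middleGraph v
  rcases G.eq_or_eq_of_mem_incidenceSet (hdeg v) ⟨e.2, hve⟩ ⟨f.2, hvf⟩ ⟨g.2, hvg⟩
    (Subtype.coe_injective.ne hef) with h | h
  · exact he (Subtype.coe_injective h ▸ hg)
  · exact hf (Subtype.coe_injective h ▸ hg)

theorem IsTOCDomSet.ncard_compl_le_three_of_middleGraph [G.LocallyFinite]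
    (hdeg : ∀ v, G.degree v ≤ 2) {D : Set (V ⊕ G.edgeSet)}
    (hD : IsTOCDomSet (middleGraph G) D) : Dᶜ.ncard ≤ 3 := by
  obtain ⟨hdom, hconn⟩ := hD
  by_cases hE : ∃ e : G.edgeSet, .inr e ∈ Dᶜ
  · obtain ⟨⟨e, he⟩, heD⟩ := hE
    induction e using Sym2.ind with | _ a b => ?_
    have hvert : ∀ v ∈ s(a, b), ∀ z ∈ Dᶜ, (middleGraph G).Adj (.inl v) z →
        z = .inr ⟨s(a, b), he⟩ := by
      rintro v hv (w | f) hz hadj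
      · exact (middleGraph_not_adj_inl_inl hadj).elim
      · exact congrArg _
          (hdom.eq_of_inr_notMem_of_middleGraph hdeg (middleGraph_adj_inl_inr.1 hadj) hv hz heD)
    have hsub : Dᶜ ⊆ {.inl a, .inr ⟨s(a, b), he⟩, .inl b} := by
      refine hconn.subset_of_adj_mem heD (by simp) ?_
      rintro y - z hz (rfl | rfl | rfl) hyz
      · exact .inr (.inl (hvert a (Sym2.mem_mk_left a b) z hz hyz))
      · rcases z with w | f
        · rcases Sym2.mem_iff.1 (middleGraph_adj_inr_inl.1 hyz) with rfl | rfl <;> simp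
        · obtain ⟨hef, v, hve, hvf⟩ := middleGraph_adj_inr_inr.1 hyz
          exact (hef (hdom.eq_of_inr_notMem_of_middleGraph hdeg hve hvf heD hz)).elim
      · exact .inr (.inl (hvert b (Sym2.mem_mk_right a b) z hz hyz))
    exact (Set.ncard_le_ncard hsub).trans (Set.ncard_inl_inr_inl (G.mem_edgeSet.1 he).ne _).le
  · push Not at hE
    obtain ⟨⟨v | e, hx₀⟩⟩ := hconn.nonempty
    · have hsub : Dᶜ ⊆ {.inl v} := by
        refine hconn.subset_of_adj_mem hx₀ rfl ?_
        rintro y - (w | e) hz rfl hyz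
        · exact (middleGraph_not_adj_inl_inl hyz).elim
        · exact (hE e hz).elim
      exact (Set.ncard_le_ncard hsub).trans (by simp)
    · exact (hE e hx₀).elim

theorem isTOCDomSet_middleGraph_compl_edge [G.LocallyFinite] (hdeg : ∀ v, 2 ≤ G.degree v)
    {a b : V} (he : s(a, b) ∈ G.edgeSet) :
    IsTOCDomSet (middleGraph G) {.inl a, .inr ⟨s(a, b), he⟩, .inl b}ᶜ := by
  refine ⟨?_, ?_⟩
  · rintro (v | ⟨f, hf⟩)
    · obtain ⟨g, ⟨hg, hvg⟩, hgab⟩ := G.exists_mem_incidenceSet_ne (hdeg v) s(a, b)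
      exact ⟨.inr ⟨g, hg⟩, by simpa using hgab, middleGraph_adj_inl_inr.2 hvg⟩
    · induction f using Sym2.ind with | _ u w => ?_
      obtain ⟨g, hg, hgf, hgab, hug⟩ := G.exists_adj_edge_ne hdeg hf s(a, b)
      refine ⟨.inr ⟨g, hg⟩, by simpa using hgab,
        middleGraph_adj_inr_inr.2 ⟨fun h => hgf (congrArg Subtype.val h).symm, ?_⟩⟩
      rcases hug with h | h
      · exact ⟨u, Sym2.mem_mk_left u w, h⟩
      · exact ⟨w, Sym2.mem_mk_right u w, h⟩
  · have hunion : ({.inl a, .inr ⟨s(a, b), he⟩, .inl b} : Set (V ⊕ G.edgeSet)) =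
        {.inl a, .inr ⟨s(a, b), he⟩} ∪ {.inr ⟨s(a, b), he⟩, .inl b} := by
      ext
      simp only [Set.mem_insert_iff, Set.mem_union, Set.mem_singleton_iff]
      tauto
    rw [compl_compl, hunion]
    exact induce_union_connected
      (induce_pair_connected_of_adj (Sym2.mem_mk_left a b)).preconnected
      (induce_pair_connected_of_adj (Sym2.mem_mk_right a b)).preconnected
      ⟨.inr ⟨s(a, b), he⟩, by simp⟩

end MiddleGraph

theorem tocDomNum_eq_of_isTOCDomSet {W : Type*} {H : SimpleGraph W} {D₀ : Set W} {k : ℕ}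
    (hD₀ : IsTOCDomSet H D₀) (hk : D₀.ncard = k) (hmin : ∀ D, IsTOCDomSet H D → k ≤ D.ncard) :
    tocDomNum H = k :=
  le_antisymm (Nat.sInf_le ⟨D₀, hD₀, hk⟩)
    (le_csInf ⟨k, D₀, hD₀, hk⟩ fun _ ⟨D, hD, hDk⟩ => hDk ▸ hmin D hD)

theorem tocDomNum_middleGraph_of_isRegularOfDegree_two {V : Type*} {G : SimpleGraph V}
    [Fintype V] [DecidableRel G.Adj] [Nonempty V] (h : G.IsRegularOfDegree 2) :
    tocDomNum (middleGraph G) = 2 * Fintype.card V - 3 := by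
  have hcard : Nat.card (V ⊕ G.edgeSet) = 2 * Fintype.card V := by
    rw [Nat.card_sum, Nat.card_eq_fintype_card, Nat.card_eq_fintype_card, ← edgeFinset_card,
      h.card_edgeFinset_eq_card_of_two, two_mul]
  obtain ⟨a, b, hab⟩ : ∃ a b, G.Adj a b := by
    obtain ⟨a⟩ := ‹Nonempty V›
    exact ⟨a, G.degree_pos_iff_exists_adj a |>.1 (by rw [h.degree_eq]; omega)⟩
  have he : s(a, b) ∈ G.edgeSet := hab
  have hedge := Set.ncard_add_ncard_compl
    ({.inl a, .inr ⟨s(a, b), he⟩, .inl b} : Set (V ⊕ G.edgeSet))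
  rw [Set.ncard_inl_inr_inl hab.ne, hcard] at hedge
  refine tocDomNum_eq_of_isTOCDomSet
    (isTOCDomSet_middleGraph_compl_edge (fun v => (h.degree_eq v).ge) he) (by omega) ?_
  intro D hD
  have hD' := hD.ncard_compl_le_three_of_middleGraph fun v => (h.degree_eq v).le
  have := Set.ncard_add_ncard_compl D
  omega

theorem stmt1 (n : ℕ) (hn : 3 ≤ n) :
    tocDomNum (middleGraph (SimpleGraph.cycleGraph n)) = 2 * n - 3 := by
  obtain ⟨m, rfl⟩ : ∃ m, n = m + 3 := ⟨n - 3, by omega⟩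
  have h : (cycleGraph (m + 3)).IsRegularOfDegree 2 := fun _ => cycleGraph_degree_three_le
  rw [tocDomNum_middleGraph_of_isRegularOfDegree_two h, Fintype.card_fin]
end

section
/- Let T be a tree of order n ≥ 4 that is not isomorphic to the star K_{1,n−1}. Then γ_tc(M(T)) ≤ 2n − 4. -/
open SimpleGraph

/-!
A tree that is not a star has an edge `vw` whose endpoints both have a further neighbour:
otherwise some vertex `c` has only leaves as neighbours (a vertex with two neighbours, or any
vertex if there is none), and connectivity makes `T` the star centred at `c`.
Deleting from `M(T)` everything except the path `v — vw — w` leaves a total dominating set of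
size `(2n - 1) - 3`: `v`, `w` and `vw` are dominated by the further edges at `v` and `w`, every
other vertex by an incident edge, and every other edge by an endpoint outside `{v, w}`.
-/

namespace SimpleGraph

variable {V : Type*} {G : SimpleGraph V}

lemma exists_forall_adj_adj_eq_of_no_internal_edge [Nonempty V]
    (h : ∀ v w, G.Adj v w → (∃ t, G.Adj v t ∧ t ≠ w) → ∀ t, G.Adj w t → t = v) :
    ∃ c, ∀ u, G.Adj c u → ∀ z, G.Adj u z → z = c := by
  by_cases hbranch : ∃ c t t', G.Adj c t ∧ G.Adj c t' ∧ t ≠ t'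
  · obtain ⟨c, t, t', hct, hct', htt'⟩ := hbranch
    refine ⟨c, fun u hcu => h c u hcu ?_⟩
    by_cases htu : t = u
    · exact ⟨t', hct', htu ▸ htt'.symm⟩
    · exact ⟨t, hct, htu⟩
  · push Not at hbranch
    obtain ⟨c⟩ := ‹Nonempty V›
    exact ⟨c, fun u hcu z huz => hbranch u z c huz hcu.symm⟩

lemma Preconnected.adj_iff_xor_of_forall_adj_adj_eq {c : V} (hG : G.Preconnected)
    (hc : ∀ u, G.Adj c u → ∀ z, G.Adj u z → z = c) (a b : V) :
    G.Adj a b ↔ Xor (a = c) (b = c) := by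
  have hclosed : ∀ {u x}, G.Walk u x → (u = c ∨ G.Adj c u) → x = c ∨ G.Adj c x := by
    intro u x p
    induction p with
    | nil => exact id
    | cons huy _ ih =>
      rintro (rfl | hcu)
      · exact ih (.inr huy)
      · exact ih (.inl (hc _ hcu _ huy))
  have hcenter (x : V) : x = c ∨ G.Adj c x := hclosed (hG c x).some (.inl rfl)
  constructor
  · intro hab
    by_cases hac : a = c
    · exact .inl ⟨hac, hac ▸ hab.ne'⟩
    · exact .inr ⟨hc a ((hcenter a).resolve_left hac) b hab, hac⟩
  · rintro (⟨rfl, hbc⟩ | ⟨rfl, hab⟩)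
    · exact (hcenter b).resolve_left hbc
    · exact ((hcenter a).resolve_left hab).symm

lemma nonempty_iso_completeBipartiteGraph_of_adj_iff_xor [Fintype V] {c : V}
    (hc : ∀ a b, G.Adj a b ↔ Xor (a = c) (b = c)) :
    Nonempty (G ≃g completeBipartiteGraph (Fin 1) (Fin (Fintype.card V - 1))) := by
  classical
  let splitCenter : G ≃g completeBipartiteGraph {x // x = c} {x // ¬x = c} :=
    { toEquiv := (Equiv.sumCompl (· = c)).symm
      map_rel_iff' := by
        intro a b
        rw [hc]
        by_cases ha : a = c <;> by_cases hb : b = c <;>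
          simp [Equiv.sumCompl_symm_apply_of_pos, Equiv.sumCompl_symm_apply_of_neg, ha, hb] }
  exact ⟨splitCenter.trans <| completeBipartiteGraphCongr
    (Fintype.equivFinOfCardEq (Fintype.card_subtype_eq c))
    (Fintype.equivFinOfCardEq (by rw [Fintype.card_subtype_compl, Fintype.card_subtype_eq]))⟩

lemma Connected.exists_internal_edge [Fintype V] (hG : G.Connected)
    (hstar : IsEmpty (G ≃g completeBipartiteGraph (Fin 1) (Fin (Fintype.card V - 1)))) :
    ∃ v w, G.Adj v w ∧ (∃ t, G.Adj v t ∧ t ≠ w) ∧ ∃ t, G.Adj w t ∧ t ≠ v := by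
  by_contra! h
  have := hG.nonempty
  obtain ⟨c, hc⟩ := exists_forall_adj_adj_eq_of_no_internal_edge h
  exact hstar.elim <| Classical.choice <| nonempty_iso_completeBipartiteGraph_of_adj_iff_xor
    (hG.preconnected.adj_iff_xor_of_forall_adj_adj_eq hc)

end SimpleGraph

lemma Sym2.exists_mem_ne_ne_of_ne {V : Type*} {e : Sym2 V} {v w : V} (he : ¬e.IsDiag)
    (hne : e ≠ s(v, w)) : ∃ x ∈ e, x ≠ v ∧ x ≠ w := by
  induction e using Sym2.ind with
  | _ a b =>
    simp only [Sym2.mk_isDiag_iff, ne_eq, Sym2.eq_iff, Sym2.mem_iff, exists_eq_or_imp,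
      exists_eq_left] at he hne ⊢
    grind

section MiddleGraph

variable {V : Type*} {G : SimpleGraph V} {v w : V}

def edgeTriple (hvw : G.Adj v w) : Set (V ⊕ G.edgeSet) :=
  {.inl v, .inr ⟨s(v, w), hvw⟩, .inl w}

lemma ncard_edgeTriple (hvw : G.Adj v w) : (edgeTriple hvw).ncard = 3 :=
  Set.ncard_eq_three.mpr ⟨_, _, _, Sum.inl_ne_inr, by simpa using hvw.ne, Sum.inr_ne_inl, rfl⟩

lemma connected_induce_edgeTriple (hvw : G.Adj v w) :
    ((middleGraph G).induce (edgeTriple hvw)).Connected := by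
  have hv : (middleGraph G).Adj (.inl v) (.inr ⟨s(v, w), hvw⟩) := Sym2.mem_mk_left v w
  have hw : (middleGraph G).Adj (.inr ⟨s(v, w), hvw⟩) (.inl w) := Sym2.mem_mk_right v w
  have hsplit :
      edgeTriple hvw = {.inl v, .inr ⟨s(v, w), hvw⟩} ∪ {.inr ⟨s(v, w), hvw⟩, .inl w} := by
    ext
    simp only [edgeTriple, Set.mem_insert_iff, Set.mem_singleton_iff, Set.mem_union]
    tauto
  rw [hsplit]
  exact induce_union_connected (induce_pair_connected_of_adj hv).preconnected
    (induce_pair_connected_of_adj hw).preconnected ⟨.inr ⟨s(v, w), hvw⟩, by simp⟩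

lemma isTotalDomSet_middleGraph_compl_edgeTriple (hG : ∀ u, ∃ t, G.Adj u t) (hvw : G.Adj v w)
    (hv : ∃ t, G.Adj v t ∧ t ≠ w) (hw : ∃ t, G.Adj w t ∧ t ≠ v) :
    IsTotalDomSet (middleGraph G) (edgeTriple hvw)ᶜ := by
  have hedge {e : G.edgeSet} (he : (e : Sym2 V) ≠ s(v, w)) : .inr e ∈ (edgeTriple hvw)ᶜ := by
    simpa [edgeTriple, Subtype.ext_iff] using he
  have hvert {u : V} (hu : u ≠ v ∧ u ≠ w) : .inl u ∈ (edgeTriple hvw)ᶜ := by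
    simpa [edgeTriple] using hu
  obtain ⟨tv, hvtv, htvw⟩ := hv
  obtain ⟨tw, hwtw, htwv⟩ := hw
  have hvtv_ne : s(v, tv) ≠ s(v, w) := fun h => htvw (Sym2.congr_right.mp h)
  have hwtw_ne : s(w, tw) ≠ s(v, w) := fun h => htwv (Sym2.congr_right.mp (h.trans Sym2.eq_swap))
  rintro (u | ⟨e, he⟩)
  · by_cases huv : u = v
    · exact ⟨_, hedge (e := ⟨_, hvtv⟩) hvtv_ne, huv ▸ Sym2.mem_mk_left _ _⟩
    by_cases huw : u = w
    · exact ⟨_, hedge (e := ⟨_, hwtw⟩) hwtw_ne, huw ▸ Sym2.mem_mk_left _ _⟩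
    obtain ⟨t, hut⟩ := hG u
    refine ⟨.inr ⟨s(u, t), hut⟩, hedge fun h => ?_, Sym2.mem_mk_left _ _⟩
    have hu : u ∈ s(v, w) := (h : s(u, t) = s(v, w)) ▸ Sym2.mem_mk_left u t
    rcases Sym2.mem_iff.mp hu with rfl | rfl <;> contradiction
  · by_cases hevw : e = s(v, w)
    · subst hevw
      refine ⟨_, hedge (e := ⟨_, hvtv⟩) hvtv_ne,
        fun h => hvtv_ne (congrArg Subtype.val h).symm,
        v, Sym2.mem_mk_left _ _, Sym2.mem_mk_left _ _⟩
    obtain ⟨x, hxe, hx⟩ := Sym2.exists_mem_ne_ne_of_ne (G.not_isDiag_of_mem_edgeSet he) hevw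
    exact ⟨_, hvert hx, hxe⟩

end MiddleGraph

lemma tocDomNum_le_ncard {V : Type*} {G : SimpleGraph V} {D : Set V} (hD : IsTOCDomSet G D) :
    tocDomNum G ≤ D.ncard :=
  Nat.sInf_le ⟨D, hD, rfl⟩

theorem stmt7_general {V : Type*} [Fintype V] (T : SimpleGraph V) (hT : T.IsTree)
    (hstar : IsEmpty (T ≃g completeBipartiteGraph (Fin 1) (Fin (Fintype.card V - 1)))) :
    tocDomNum (middleGraph T) ≤ 2 * Fintype.card V - 4 := by
  obtain ⟨v, w, hvw, hv, hw⟩ := hT.connected.exists_internal_edge hstar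
  have : Nontrivial V := ⟨⟨v, w, hvw.ne⟩⟩
  have hD : IsTOCDomSet (middleGraph T) (edgeTriple hvw)ᶜ :=
    ⟨isTotalDomSet_middleGraph_compl_edgeTriple
        hT.connected.preconnected.exists_adj_of_nontrivial hvw hv hw,
      (compl_compl (edgeTriple hvw)).symm ▸ connected_induce_edgeTriple hvw⟩
  have hcard : (edgeTriple hvw)ᶜ.ncard = Fintype.card V + Nat.card T.edgeSet - 3 := by
    rw [Set.ncard_compl, ncard_edgeTriple, Nat.card_sum, Nat.card_eq_fintype_card]
  have hE : Nat.card T.edgeSet + 1 = Fintype.card V := by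
    rw [← Nat.card_eq_fintype_card]
    exact (isTree_iff_connected_and_card.mp hT).2
  exact (tocDomNum_le_ncard hD).trans_eq (by omega)

theorem stmt7 {V : Type*} [Fintype V] (T : SimpleGraph V) (hT : T.IsTree)
    (hn : 4 ≤ Fintype.card V)
    (hstar : IsEmpty (T ≃g completeBipartiteGraph (Fin 1) (Fin (Fintype.card V - 1)))) :
    tocDomNum (middleGraph T) ≤ 2 * Fintype.card V - 4 :=
  stmt7_general T hT hstar
end

section
/- Let T be a tree of order n ≥ 6 with diameter 4 whose longest path is v1 v2 v3 v4 v5 and such that deg_T(v3) = n − 3 (all remaining n−5 vertices are leaves attached to v3). Then γ_tc(M(T)) = 2n − 6. -/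
open SimpleGraph

/-!
Write `K = {v 1, v 2, v 3}`. Acyclicity and the degree of `v 2` force `T` to be the spider
with centre `v 2`, legs `v 1 v 0` and `v 3 v 4`, and all other vertices leaves on `v 2`. In
`M(T)` a leaf of `T` is adjacent only to its pendant edge, so every total dominating set `D`
contains all pendant edges. If `D` misses a leaf `a`, then `a` is isolated in `M(T) - D` and
connectivity forces `D` to be everything but `a`. Otherwise `D` contains every vertex and
edge of `T` that meets a leaf, i.e. everything except the five vertices
`v 1, v 2, v 3, v 1 v 2, v 2 v 3` of `M(T[K])`; this complement, of size `2n - 6`, is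
itself a total outer-connected dominating set because `T[K]` is a star and every vertex of `K`
has a leaf neighbour.
-/

lemma eq_singleton_of_connected_induce {W : Type*} {H : SimpleGraph W} {S : Set W}
    (hS : (H.induce S).Connected) {x : W} (hx : x ∈ S) (hiso : ∀ y ∈ S, ¬H.Adj x y) :
    S = {x} := by
  refine Set.eq_singleton_iff_unique_mem.mpr ⟨hx, fun y hy => ?_⟩
  obtain ⟨p⟩ := hS.preconnected ⟨x, hx⟩ ⟨y, hy⟩
  cases p with
  | nil => rfl
  | cons h _ => exact absurd h (hiso _ (Subtype.prop _))

section MiddleGraph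

variable {V : Type*} {G : SimpleGraph V}

@[simp] lemma middleGraph_adj_inl_inl (a b : V) :
    ¬(middleGraph G).Adj (.inl a) (.inl b) := id

lemma eq_of_mem_of_neighborSet_eq_singleton {a b : V} (hab : G.neighborSet a = {b})
    {e : Sym2 V} (he : e ∈ G.edgeSet) (ha : a ∈ e) : e = s(a, b) := by
  obtain ⟨c, rfl⟩ := Sym2.mem_iff_exists.mp ha
  have hc : c ∈ G.neighborSet a := he
  rw [hab, Set.mem_singleton_iff] at hc
  rw [hc]

/-- In `M(G)` the only neighbour of a leaf `a` is its pendant edge. -/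
lemma IsTotalDomSet.inr_mem_of_neighborSet_eq_singleton {D : Set (V ⊕ G.edgeSet)}
    (hD : IsTotalDomSet (middleGraph G) D) {a b : V} (hab : G.neighborSet a = {b})
    {e : G.edgeSet} (ha : a ∈ (e : Sym2 V)) : Sum.inr e ∈ D := by
  obtain ⟨_ | f, hfD, hf⟩ := hD (.inl a)
  · exact absurd hf (middleGraph_adj_inl_inl _ _)
  · have : f = e := Subtype.ext <| (eq_of_mem_of_neighborSet_eq_singleton hab f.2 hf).trans
      (eq_of_mem_of_neighborSet_eq_singleton hab e.2 ha).symm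
    exact this ▸ hfD

/-- The vertex set of `M(G[K])` inside `M(G)`. -/
def middleSet (G : SimpleGraph V) (K : Set V) : Set (V ⊕ G.edgeSet) :=
  {x | Sum.elim (· ∈ K) (fun e => ∀ a ∈ (e : Sym2 V), a ∈ K) x}

variable {K : Set V}

@[simp] lemma inl_mem_middleSet {a : V} : Sum.inl a ∈ middleSet G K ↔ a ∈ K := Iff.rfl

@[simp] lemma inr_mem_middleSet {e : G.edgeSet} :
    Sum.inr e ∈ middleSet G K ↔ ∀ a ∈ (e : Sym2 V), a ∈ K := Iff.rfl

lemma IsTOCDomSet.compl_middleSet_subset_or_compl_eq_singleton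
    (hleaf : ∀ a ∉ K, a ∈ leafSet G) {D : Set (V ⊕ G.edgeSet)}
    (hD : IsTOCDomSet (middleGraph G) D) : (middleSet G K)ᶜ ⊆ D ∨ ∃ x, Dᶜ = {x} := by
  by_cases hout : ∃ a ∉ K, Sum.inl a ∉ D
  · obtain ⟨a, haK, haD⟩ := hout
    obtain ⟨b, hab⟩ := hleaf a haK
    refine .inr ⟨_, eq_singleton_of_connected_induce hD.2 haD ?_⟩
    rintro (_ | e) heD hadj
    · exact middleGraph_adj_inl_inl _ _ hadj
    · exact heD (hD.1.inr_mem_of_neighborSet_eq_singleton hab hadj)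
  · push Not at hout
    refine .inl ?_
    rintro (a | e) hx
    · exact hout a hx
    · simp only [Set.mem_compl_iff, inr_mem_middleSet, not_forall] at hx
      obtain ⟨a, ha, haK⟩ := hx
      obtain ⟨b, hab⟩ := hleaf a haK
      exact hD.1.inr_mem_of_neighborSet_eq_singleton hab ha

lemma isTOCDomSet_compl_middleSet (hleaf : ∀ a ∉ K, a ∈ leafSet G)
    (hK : ∀ k ∈ K, ∃ b ∉ K, G.Adj k b)
    (hconn : ((middleGraph G).induce (middleSet G K)).Connected) :
    IsTOCDomSet (middleGraph G) (middleSet G K)ᶜ := by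
  have hedge : ∀ a, ∃ e : G.edgeSet, a ∈ (e : Sym2 V) ∧ Sum.inr e ∉ middleSet G K := by
    intro a
    by_cases ha : a ∈ K
    · obtain ⟨b, hb, hab⟩ := hK a ha
      exact ⟨⟨s(a, b), hab⟩, Sym2.mem_mk_left _ _,
        fun h => hb (h b (Sym2.mem_mk_right _ _))⟩
    · obtain ⟨b, hab⟩ := hleaf a ha
      have : G.Adj a b := (Set.ext_iff.mp hab b).mpr rfl
      exact ⟨⟨s(a, b), this⟩, Sym2.mem_mk_left _ _,
        fun h => ha (h a (Sym2.mem_mk_left _ _))⟩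
  refine ⟨?_, by rwa [compl_compl]⟩
  rintro (a | e)
  · obtain ⟨f, haf, hf⟩ := hedge a
    exact ⟨.inr f, hf, haf⟩
  · by_cases he : Sum.inr e ∈ middleSet G K
    · obtain ⟨a, ha⟩ : ∃ a, a ∈ (e : Sym2 V) := ⟨_, Sym2.out_fst_mem _⟩
      obtain ⟨f, haf, hf⟩ := hedge a
      exact ⟨.inr f, hf, fun hef => hf (hef ▸ he), a, ha, haf⟩
    · simp only [inr_mem_middleSet, not_forall] at he
      obtain ⟨a, ha, haK⟩ := he
      exact ⟨.inl a, haK, ha⟩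

lemma connected_induce_middleSet_of_isStar {b : V} (hb : b ∈ K)
    (hspoke : ∀ a ∈ K, a ≠ b → G.Adj a b)
    (hcentre : ∀ e : G.edgeSet, Sum.inr e ∈ middleSet G K → b ∈ (e : Sym2 V)) :
    ((middleGraph G).induce (middleSet G K)).Connected := by
  let c : middleSet G K := ⟨.inl b, hb⟩
  have hc : ∀ x : middleSet G K, ((middleGraph G).induce (middleSet G K)).Reachable x c := by
    rintro ⟨a | e, hx⟩
    · by_cases hab : a = b
      · subst hab; rfl
      have hab' := hspoke a hx hab
      have he : Sum.inr (⟨s(a, b), hab'⟩ : G.edgeSet) ∈ middleSet G K :=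
        Sym2.forall_mem_pair.mpr ⟨hx, hb⟩
      exact (Adj.reachable (G := (middleGraph G).induce _) (u := ⟨_, hx⟩) (v := ⟨_, he⟩)
        (Sym2.mem_mk_left a b)).trans (Adj.reachable (Sym2.mem_mk_right a b))
    · exact Adj.reachable (hcentre e hx)
  exact (connected_iff_exists_forall_reachable _).mpr ⟨c, fun x => (hc x).symm⟩

end MiddleGraph

lemma IsTOCDomSet.tocDomNum_eq {V : Type*} {G : SimpleGraph V} {D : Set V}
    (hD : IsTOCDomSet G D) (hmin : ∀ D', IsTOCDomSet G D' → D.ncard ≤ D'.ncard) :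
    tocDomNum G = D.ncard :=
  le_antisymm (Nat.sInf_le ⟨D, hD, rfl⟩) <|
    le_csInf ⟨_, D, hD, rfl⟩ fun _ ⟨D', hD', h⟩ => h ▸ hmin D' hD'

section Spider

variable {V : Type*} {T : SimpleGraph V} {v : Fin 5 → V}

/- Acyclicity is used through `IsAcyclic.eq_snd_of_adj_start`: a neighbour of the first vertex
of a path that lies on the path is its second vertex. -/
lemma neighborSet_two_eq_compl [Fintype V] (hT : T.IsAcyclic) (hinj : Function.Injective v)
    (hpath : ∀ i : Fin 4, T.Adj (v i.castSucc) (v i.succ))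
    (hdeg : (T.neighborSet (v 2)).ncard = Fintype.card V - 3) :
    T.neighborSet (v 2) = {v 0, v 2, v 4}ᶜ := by
  have hsub : T.neighborSet (v 2) ⊆ {v 0, v 2, v 4}ᶜ := by
    intro w hw
    simp only [Set.mem_compl_iff, Set.mem_insert_iff, Set.mem_singleton_iff, not_or]
    refine ⟨?_, (T.ne_of_adj hw).symm, ?_⟩ <;> rintro rfl
    · have := hT.eq_snd_of_adj_start (p := .cons (hpath 1).symm (.cons (hpath 0).symm .nil))
        (by simp [hinj.eq_iff]) hw (by simp)
      simp [hinj.eq_iff] at this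
    · have := hT.eq_snd_of_adj_start (p := .cons (hpath 2) (.cons (hpath 3) .nil))
        (by simp [hinj.eq_iff]) hw (by simp)
      simp [hinj.eq_iff] at this
  refine Set.eq_of_subset_of_ncard_le hsub ?_ (Set.toFinite _)
  rw [hdeg, Set.ncard_compl, Nat.card_eq_fintype_card,
    Set.ncard_eq_three.mpr ⟨_, _, _, hinj.ne (by decide), hinj.ne (by decide),
      hinj.ne (by decide), rfl⟩]

lemma neighborSet_zero_eq (hT : T.IsAcyclic) (hinj : Function.Injective v)
    (hpath : ∀ i : Fin 4, T.Adj (v i.castSucc) (v i.succ))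
    (hN : T.neighborSet (v 2) = {v 0, v 2, v 4}ᶜ) :
    T.neighborSet (v 0) = {v 1} := by
  refine Set.eq_singleton_iff_unique_mem.mpr ⟨hpath 0, fun w hw => ?_⟩
  by_cases hwv : w ∈ Set.range v
  · obtain ⟨i, rfl⟩ := hwv
    exact hT.eq_snd_of_adj_start
      (p := .cons (hpath 0) (.cons (hpath 1) (.cons (hpath 2) (.cons (hpath 3) .nil))))
      (by simp [hinj.eq_iff]) hw (by fin_cases i <;> simp)
  · have hwv' : ∀ i, v i ≠ w := fun i h => hwv ⟨i, h⟩
    have h2w : T.Adj (v 2) w := by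
      rw [← mem_neighborSet, hN]
      simp [(hwv' _).symm]
    exact hT.eq_snd_of_adj_start (p := .cons (hpath 0) (.cons (hpath 1) (.cons h2w .nil)))
      (by simp [hinj.eq_iff, hwv']) hw (by simp)

lemma neighborSet_four_eq (hT : T.IsAcyclic) (hinj : Function.Injective v)
    (hpath : ∀ i : Fin 4, T.Adj (v i.castSucc) (v i.succ))
    (hN : T.neighborSet (v 2) = {v 0, v 2, v 4}ᶜ) :
    T.neighborSet (v 4) = {v 3} :=
  neighborSet_zero_eq (v := v ∘ Fin.rev) hT (hinj.comp Fin.rev_injective)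
    (fun i => by simpa [Fin.rev_castSucc, Fin.rev_succ] using (hpath i.rev).symm)
    (show T.neighborSet (v 2) = {v 4, v 2, v 0}ᶜ by
      rw [hN]
      ext
      simp only [Set.mem_compl_iff, Set.mem_insert_iff, Set.mem_singleton_iff]
      tauto)

lemma mem_leafSet_of_notMem (hT : T.IsAcyclic) (hinj : Function.Injective v)
    (hpath : ∀ i : Fin 4, T.Adj (v i.castSucc) (v i.succ))
    (hN : T.neighborSet (v 2) = {v 0, v 2, v 4}ᶜ) {a : V}
    (ha : a ∉ ({v 1, v 2, v 3} : Set V)) : a ∈ leafSet T := by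
  have h0 := neighborSet_zero_eq hT hinj hpath hN
  have h4 := neighborSet_four_eq hT hinj hpath hN
  simp only [Set.mem_insert_iff, Set.mem_singleton_iff, not_or] at ha
  obtain ⟨ha1, ha2, ha3⟩ := ha
  by_cases ha0 : a = v 0
  · exact ⟨v 1, ha0 ▸ h0⟩
  by_cases ha4 : a = v 4
  · exact ⟨v 3, ha4 ▸ h4⟩
  have h2a : T.Adj (v 2) a := by
    rw [← mem_neighborSet, hN]
    simp [ha0, ha2, ha4]
  refine ⟨v 2, Set.eq_singleton_iff_unique_mem.mpr ⟨h2a.symm, fun w (hw : T.Adj a w) => ?_⟩⟩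
  by_cases hw' : w ∈ ({v 0, v 2, v 4} : Set V)
  · simp only [Set.mem_insert_iff, Set.mem_singleton_iff] at hw'
    rcases hw' with rfl | rfl | rfl
    · exact absurd (h0 ▸ hw.symm : a ∈ ({v 1} : Set V)) ha1
    · rfl
    · exact absurd (h4 ▸ hw.symm : a ∈ ({v 3} : Set V)) ha3
  · have h2w : T.Adj (v 2) w := by rwa [← mem_neighborSet, hN]
    exact hT.eq_snd_of_adj_start (p := .cons h2a.symm (.cons h2w .nil))
      (by simp [ha2, hw.ne, h2w.ne]) hw (by simp)

lemma middleSet_eq (hT : T.IsAcyclic) (hinj : Function.Injective v)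
    (hpath : ∀ i : Fin 4, T.Adj (v i.castSucc) (v i.succ)) :
    middleSet T {v 1, v 2, v 3} =
      {.inl (v 1), .inl (v 2), .inl (v 3), .inr ⟨s(v 1, v 2), hpath 1⟩,
        .inr ⟨s(v 2, v 3), hpath 2⟩} := by
  have h13 : ¬T.Adj (v 1) (v 3) := fun h => by
    have := hT.eq_snd_of_adj_start (p := .cons (hpath 1) (.cons (hpath 2) .nil))
      (by simp [hinj.eq_iff]) h (by simp)
    simp [hinj.eq_iff] at this
  ext (a | e)
  · simp
  simp only [inr_mem_middleSet, Set.mem_insert_iff, Set.mem_singleton_iff, reduceCtorEq,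
    Sum.inr.injEq, false_or]
  refine ⟨fun h => ?_, by rintro (rfl | rfl) <;> simp⟩
  obtain ⟨e, he⟩ := e
  induction e using Sym2.ind with | _ x y => ?_
  obtain ⟨hx | hx | hx, hy | hy | hy⟩ := Sym2.forall_mem_pair.mp h <;> subst hx hy
  all_goals first
    | exact absurd he (T.loopless.irrefl _)
    | exact absurd he h13 | exact absurd he.symm h13
    | simp [Sym2.eq_swap]

lemma ncard_middleSet_eq_five (hT : T.IsAcyclic) (hinj : Function.Injective v)
    (hpath : ∀ i : Fin 4, T.Adj (v i.castSucc) (v i.succ)) :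
    (middleSet T {v 1, v 2, v 3}).ncard = 5 := by
  rw [middleSet_eq hT hinj hpath, Set.ncard_insert_of_notMem, Set.ncard_insert_of_notMem,
    Set.ncard_insert_of_notMem, Set.ncard_pair] <;> simp [hinj.eq_iff, Subtype.ext_iff]

lemma connected_induce_middleSet (hT : T.IsAcyclic) (hinj : Function.Injective v)
    (hpath : ∀ i : Fin 4, T.Adj (v i.castSucc) (v i.succ)) :
    ((middleGraph T).induce (middleSet T {v 1, v 2, v 3})).Connected := by
  refine connected_induce_middleSet_of_isStar (b := v 2) (by simp) ?_ fun e he => ?_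
  · simp only [Set.mem_insert_iff, Set.mem_singleton_iff]
    rintro a (rfl | rfl | rfl) ha
    exacts [hpath 1, absurd rfl ha, (hpath 2).symm]
  · simp only [middleSet_eq hT hinj hpath, Set.mem_insert_iff, Set.mem_singleton_iff,
      reduceCtorEq, Sum.inr.injEq, false_or] at he
    rcases he with rfl | rfl <;> simp

lemma exists_adj_notMem_of_mem [Fintype V] (hinj : Function.Injective v)
    (hpath : ∀ i : Fin 4, T.Adj (v i.castSucc) (v i.succ))
    (hN : T.neighborSet (v 2) = {v 0, v 2, v 4}ᶜ) (hn : 5 < Fintype.card V) :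
    ∀ k ∈ ({v 1, v 2, v 3} : Set V), ∃ b ∉ ({v 1, v 2, v 3} : Set V), T.Adj k b := by
  obtain ⟨u, hu⟩ : ∃ u, ∀ i, v i ≠ u := by
    by_contra! h
    have := Fintype.card_le_of_surjective v h
    simp only [Fintype.card_fin] at this
    omega
  have h2u : T.Adj (v 2) u := by
    rw [← mem_neighborSet, hN]
    simp [(hu _).symm]
  simp only [Set.mem_insert_iff, Set.mem_singleton_iff]
  rintro k (rfl | rfl | rfl)
  · exact ⟨v 0, by simp [hinj.eq_iff], (hpath 0).symm⟩
  · exact ⟨u, by simp [(hu _).symm], h2u⟩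
  · exact ⟨v 4, by simp [hinj.eq_iff], hpath 3⟩

end Spider

lemma SimpleGraph.IsTree.natCard_sum_edgeSet {V : Type*} [Finite V] {G : SimpleGraph V}
    (hG : G.IsTree) : Nat.card (V ⊕ G.edgeSet) + 1 = 2 * Nat.card V := by
  have := (isTree_iff_connected_and_card.mp hG).2
  rw [Nat.card_sum]
  omega

theorem stmt13_general {V : Type*} [Fintype V] (T : SimpleGraph V) (hT : T.IsTree)
    (hn : 6 ≤ Fintype.card V) (v : Fin 5 → V)
    (hinj : Function.Injective v)
    (hpath : ∀ i : Fin 4, T.Adj (v i.castSucc) (v i.succ))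
    (hdeg : (T.neighborSet (v 2)).ncard = Fintype.card V - 3) :
    tocDomNum (middleGraph T) = 2 * Fintype.card V - 6 := by
  have hN := neighborSet_two_eq_compl hT.isAcyclic hinj hpath hdeg
  have hleaf : ∀ a ∉ ({v 1, v 2, v 3} : Set V), a ∈ leafSet T :=
    fun a => mem_leafSet_of_notMem hT.isAcyclic hinj hpath hN
  have hTOC : IsTOCDomSet (middleGraph T) (middleSet T {v 1, v 2, v 3})ᶜ :=
    isTOCDomSet_compl_middleSet hleaf (exists_adj_notMem_of_mem hinj hpath hN hn)
      (connected_induce_middleSet hT.isAcyclic hinj hpath)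
  have hcard := hT.natCard_sum_edgeSet
  rw [Nat.card_eq_fintype_card (α := V)] at hcard
  have hcompl : (middleSet T {v 1, v 2, v 3})ᶜ.ncard = 2 * Fintype.card V - 6 := by
    have := Set.ncard_add_ncard_compl (middleSet T {v 1, v 2, v 3})
    rw [ncard_middleSet_eq_five hT.isAcyclic hinj hpath] at this
    omega
  rw [← hcompl]
  refine hTOC.tocDomNum_eq fun D hD => ?_
  rcases hD.compl_middleSet_subset_or_compl_eq_singleton hleaf with hsub | ⟨x, hx⟩
  · exact Set.ncard_le_ncard hsub
  · have := Set.ncard_add_ncard_compl D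
    rw [hx, Set.ncard_singleton] at this
    omega

theorem stmt13 {V : Type*} [Fintype V] (T : SimpleGraph V) (hT : T.IsTree)
    (hn : 6 ≤ Fintype.card V) (hdiam : T.diam = 4) (v : Fin 5 → V)
    (hinj : Function.Injective v)
    (hpath : ∀ i : Fin 4, T.Adj (v i.castSucc) (v i.succ))
    (hdeg : (T.neighborSet (v 2)).ncard = Fintype.card V - 3) :
    tocDomNum (middleGraph T) = 2 * Fintype.card V - 6 :=
  stmt13_general T hT hn v hinj hpath hdeg
end
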